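/- Let q ≥ 4 be a prime power, let a, c be fixed non-zero elements of F_q, let e be a divisor of q−1, let p_1, …, p_s (s ≥ 1) be the distinct primes dividing q−1 but not e, and set δ = 1 − 2∑_{i=1}^s 1/p_i. If δ > 0, then N(q−1, q−1) ≥ δ·θ(e)^2·√q·( √q − W(e)^2 − ((2s−1)/δ + 1)·W(e)^2 ). -/

import Mathlib

/-- For a divisor `e` of `q - 1`, a non-zero element `g` of the finite field `F` is
`e`-free if whenever `g = h ^ d` with `h ∈ F` and `d ∣ e`, then `d = 1`. -/
def IsEFree {F : Type*} [Field F] (e : ℕ) (g : F) : Prop :=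
  g ≠ 0 ∧ ∀ d : ℕ, d ∣ e → (∃ h : F, h ^ d = g) → d = 1

/-- For fixed `a, c` in the finite field `F` and `e₁, e₂` dividing `q - 1`,
`Ncnt a c e₁ e₂` is the number of `g ∈ F` such that `g` is `e₁`-free and `a - c * g`
is `e₂`-free. -/
noncomputable def Ncnt {F : Type*} [Field F] [Fintype F] (a c : F) (e₁ e₂ : ℕ) : ℕ :=
  {g : F | IsEFree e₁ g ∧ IsEFree e₂ (a - c * g)}.ncard

/-- `θ(n) = ∏_{p ∣ n} (1 - 1/p)`, the product over the distinct primes dividing `n`. -/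
noncomputable def thetaFn (n : ℕ) : ℝ :=
  ∏ p ∈ n.primeFactors, (1 - 1 / (p : ℝ))

/-- `W(n) = 2^(ω n)`, the number of square-free divisors of `n`, where `ω n` is the
number of distinct prime factors of `n`. -/
def Wfn (n : ℕ) : ℕ := 2 ^ n.primeFactors.card

/-!
Expand the indicator of `e`-free elements in multiplicative characters: inclusion–exclusion over
the primes `p ∣ e`, together with `[g is a d-th power] = d⁻¹ ∑_{χ^d = 1} χ g`, writes it as
`∑ χ, c_e(χ) χ g`, where `c_e(1) = θ(e)` and `∑ χ, |c_e(χ)| = θ(e) W(e)`. Then `N(e₁, e₂)` is a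
double sum of `c_{e₁}(χ) c_{e₂}(ψ)` times `∑ g, χ g ψ (a - c g)`, a twisted Jacobi sum: it equals
`q - 2` for `χ = ψ = 1` and has absolute value at most `√q` otherwise. This gives
`N(e, e) ≈ θ(e)² q`, and, for a prime `p ∣ q - 1` with `p ∤ e`, since `c_{pe} - (1 - 1/p) c_e`
vanishes at `1` and has mass `(1 - 1/p) θ(e) W(e)`, also
`N(pe, e), N(e, pe) ≈ (1 - 1/p) N(e, e)` up to `(1 - 1/p) θ(e)² W(e)² √q`. The sieve inequality
`N(q-1, q-1) ≥ ∑ₚ (N(pe, e) + N(e, pe)) - (2s - 1) N(e, e)` combines these estimates.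
-/

open Finset

theorem exists_pow_mul_eq_of_coprime {G₀ : Type*} [CommGroupWithZero G₀] {m n : ℕ}
    (hmn : m.Coprime n) {g x y : G₀} (hg : g ≠ 0) (hx : x ^ m = g) (hy : y ^ n = g) :
    ∃ w : G₀, w ^ (m * n) = g := by
  refine ⟨y ^ m.gcdA n * x ^ m.gcdB n, ?_⟩
  have hbezout : (m : ℤ) * m.gcdA n + n * m.gcdB n = 1 := by
    rw [← Nat.gcd_eq_gcd_ab, hmn, Nat.cast_one]
  calc (y ^ m.gcdA n * x ^ m.gcdB n) ^ (m * n)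
      = (y ^ (n : ℤ)) ^ (m * m.gcdA n) * (x ^ (m : ℤ)) ^ (n * m.gcdB n) := by
        rw [← zpow_natCast, mul_zpow, ← zpow_mul, ← zpow_mul, ← zpow_mul, ← zpow_mul]
        push_cast
        ring_nf
    _ = g := by
        rw [zpow_natCast, zpow_natCast, hx, hy, ← zpow_add₀ hg, hbezout, zpow_one]

theorem exists_pow_prod_primes_iff {G₀ : Type*} [CommGroupWithZero G₀] {S : Finset ℕ}
    (hS : ∀ p ∈ S, p.Prime) {g : G₀} (hg : g ≠ 0) :
    (∃ h : G₀, h ^ (∏ p ∈ S, p) = g) ↔ ∀ p ∈ S, ∃ h : G₀, h ^ p = g := by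
  induction S using Finset.induction with
  | empty => simp
  | insert p S hpS ih =>
    rw [forall_mem_insert] at hS ⊢
    rw [prod_insert hpS, ← ih hS.2]
    refine ⟨fun ⟨h, hh⟩ ↦ ⟨⟨h ^ ∏ q ∈ S, q, by rw [← pow_mul, mul_comm, hh]⟩,
      ⟨h ^ p, by rw [← pow_mul, hh]⟩⟩, fun ⟨⟨x, hx⟩, ⟨y, hy⟩⟩ ↦ ?_⟩
    refine exists_pow_mul_eq_of_coprime ?_ hg hx hy
    exact Nat.Coprime.prod_right fun q hq ↦
      (Nat.coprime_primes hS.1 (hS.2 q hq)).mpr fun h ↦ hpS (h ▸ hq)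

theorem isEFree_iff {F : Type*} [Field F] {e : ℕ} (he : e ≠ 0) {g : F} :
    IsEFree e g ↔ g ≠ 0 ∧ ∀ p ∈ e.primeFactors, ¬∃ h : F, h ^ p = g := by
  refine ⟨fun ⟨hg, hfree⟩ ↦ ⟨hg, fun p hp hpow ↦ ?_⟩, fun ⟨hg, hnp⟩ ↦ ⟨hg, fun d hd hpow ↦ ?_⟩⟩
  · exact (Nat.prime_of_mem_primeFactors hp).ne_one (hfree p (Nat.dvd_of_mem_primeFactors hp) hpow)
  · by_contra hd1
    obtain ⟨p, hp, ⟨m, rfl⟩⟩ := Nat.exists_prime_and_dvd hd1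
    obtain ⟨h, hh⟩ := hpow
    exact hnp p (Nat.mem_primeFactors.mpr ⟨hp, (dvd_mul_right p m).trans hd, he⟩)
      ⟨h ^ m, by rw [← pow_mul, mul_comm, hh]⟩

theorem IsEFree.of_dvd {F : Type*} [Field F] {d e : ℕ} {g : F} (h : IsEFree e g) (hde : d ∣ e) :
    IsEFree d g :=
  ⟨h.1, fun m hm hpow ↦ h.2 m (hm.trans hde) hpow⟩

theorem IsEFree.of_forall_prime_mul {F : Type*} [Field F] {n e : ℕ} {g : F} (hn : n ≠ 0)
    (he : IsEFree e g) (hprime : ∀ p ∈ n.primeFactors \ e.primeFactors, IsEFree (p * e) g) :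
    IsEFree n g := by
  refine (isEFree_iff hn).mpr ⟨he.1, fun p hp hpow ↦ ?_⟩
  have hpp := Nat.prime_of_mem_primeFactors hp
  by_cases hpe : p ∈ e.primeFactors
  · exact hpp.ne_one (he.2 p (Nat.dvd_of_mem_primeFactors hpe) hpow)
  · exact hpp.ne_one ((hprime p (mem_sdiff.mpr ⟨hp, hpe⟩)).2 p (dvd_mul_right p e) hpow)

section Counting

variable {F : Type*} [Field F] [Fintype F]

open scoped Classical in
noncomputable def freePairSet (a c : F) (e₁ e₂ : ℕ) : Finset F :=
  {g | IsEFree e₁ g ∧ IsEFree e₂ (a - c * g)}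

theorem mem_freePairSet {a c g : F} {e₁ e₂ : ℕ} :
    g ∈ freePairSet a c e₁ e₂ ↔ IsEFree e₁ g ∧ IsEFree e₂ (a - c * g) := by
  simp [freePairSet]

theorem Ncnt_eq_card (a c : F) (e₁ e₂ : ℕ) : Ncnt a c e₁ e₂ = #(freePairSet a c e₁ e₂) := by
  classical
  rw [Ncnt, Set.ncard_eq_toFinset_card', Set.toFinset_ofPred, freePairSet]

end Counting

namespace Nat

theorem squarefree_prod_primes {S : Finset ℕ} (hS : ∀ p ∈ S, p.Prime) :
    Squarefree (∏ p ∈ S, p) :=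
  Finset.squarefree_prod_of_pairwise_isCoprime
    (fun p hp q hq hpq ↦
      Nat.coprime_iff_isRelPrime.mp <| (Nat.coprime_primes (hS p hp) (hS q hq)).mpr hpq)
    fun p hp ↦ (hS p hp).squarefree

theorem dvd_prod_primes_iff {S : Finset ℕ} (hS : ∀ p ∈ S, p.Prime) {d : ℕ} :
    d ∣ ∏ p ∈ S, p ↔ Squarefree d ∧ d.primeFactors ⊆ S := by
  have hsq := squarefree_prod_primes hS
  refine ⟨fun h ↦ ⟨hsq.squarefree_of_dvd h, ?_⟩, fun ⟨hd, hdS⟩ ↦ ?_⟩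
  · simpa [primeFactors_prod hS] using primeFactors_mono h hsq.ne_zero
  · rw [← prod_primeFactors_of_squarefree hd]
    exact Finset.prod_dvd_prod_of_subset _ _ _ hdS

theorem Prime.one_sub_one_div_nonneg {p : ℕ} (hp : p.Prime) : (0 : ℝ) ≤ 1 - 1 / p :=
  sub_nonneg.mpr (div_le_one_of_le₀ (mod_cast hp.one_le) (Nat.cast_nonneg p))

theorem primeFactors_prime_mul {p e : ℕ} (hp : p.Prime) (he : e ≠ 0) :
    (p * e).primeFactors = insert p e.primeFactors := by
  rw [primeFactors_mul hp.ne_zero he, hp.primeFactors, singleton_union]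

end Nat

section Arithmetic

variable {p e : ℕ}

theorem thetaFn_prime_mul (hp : p.Prime) (hpe : ¬p ∣ e) (he : e ≠ 0) :
    thetaFn (p * e) = (1 - 1 / p) * thetaFn e := by
  rw [thetaFn, thetaFn, Nat.primeFactors_prime_mul hp he,
    prod_insert fun h ↦ hpe (Nat.dvd_of_mem_primeFactors h)]

theorem Wfn_prime_mul (hp : p.Prime) (hpe : ¬p ∣ e) (he : e ≠ 0) : Wfn (p * e) = 2 * Wfn e := by
  rw [Wfn, Wfn, Nat.primeFactors_prime_mul hp he,
    card_insert_of_notMem fun h ↦ hpe (Nat.dvd_of_mem_primeFactors h), pow_succ, mul_comm]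

theorem prime_mul_dvd_of_mem_primeFactors_sdiff {n : ℕ} (he : e ∣ n)
    (hp : p ∈ n.primeFactors \ e.primeFactors) : p.Prime ∧ ¬p ∣ e ∧ p * e ∣ n := by
  obtain ⟨hpn, hpe⟩ := mem_sdiff.mp hp
  have hp := Nat.prime_of_mem_primeFactors hpn
  have hpe : ¬p ∣ e := fun h ↦ hpe (Nat.mem_primeFactors.mpr
    ⟨hp, h, ne_zero_of_dvd_ne_zero (Nat.mem_primeFactors.mp hpn).2.2 he⟩)
  exact ⟨hp, hpe, Nat.Coprime.mul_dvd_of_dvd_of_dvd ((Nat.Prime.coprime_iff_not_dvd hp).mpr hpe)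
    (Nat.dvd_of_mem_primeFactors hpn) he⟩

end Arithmetic

namespace FiniteField

variable {F : Type*} [Field F] [Fintype F]

theorem card_sub_one_ne_zero : Fintype.card F - 1 ≠ 0 :=
  Nat.sub_ne_zero_of_lt Fintype.one_lt_card

noncomputable instance : Fintype (MulChar F ℂ) := Fintype.ofFinite _

instance : NeZero ((Monoid.exponent Fˣ : ℕ) : ℂ) :=
  ⟨Nat.cast_ne_zero.mpr Monoid.exponent_ne_zero_of_finite⟩

theorem natCard_mulChar : Nat.card (MulChar F ℂ) = Fintype.card F - 1 := by
  classical
  rw [MulChar.card_eq_card_units_of_hasEnoughRootsOfUnity, Nat.card_eq_fintype_card,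
    Fintype.card_units]

instance : IsCyclic (MulChar F ℂ) :=
  isCyclic_of_surjective _ (MulChar.mulEquiv_units F ℂ).some.symm.surjective

/-- Duality: the `d`-th powers are exactly the common kernel of the characters trivial on them. -/
theorem exists_pow_eq_iff_forall_mulChar {d : ℕ} {g : F} (hg : g ≠ 0) :
    (∃ h : F, h ^ d = g) ↔ ∀ χ : MulChar F ℂ, χ ^ d = 1 → χ g = 1 := by
  refine ⟨fun ⟨h, hh⟩ χ hχ ↦ ?_, fun hall ↦ ?_⟩
  · rcases eq_or_ne d 0 with rfl | hd
    · rw [← hh, pow_zero, map_one]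
    · have hh0 : h ≠ 0 := (pow_ne_zero_iff hd).mp (hh.symm ▸ hg)
      rw [← hh, map_pow, ← MulChar.pow_apply' χ hd, hχ, MulChar.one_apply hh0.isUnit]
  set H := (powMonoidHom d : Fˣ →* Fˣ).range
  set X := (MulChar.subgroupOrderIsoSubgroupMulChar F ℂ H).ofDual
  have hX : ∀ χ ∈ X, χ ^ d = 1 := fun χ hχ ↦ MulChar.ext fun v ↦ by
    rw [MulChar.pow_apply_coe, MulChar.one_apply_coe, ← map_pow, ← Units.val_pow_eq_pow_val]
    exact MulChar.mem_subgroupOrderIsoSubgroupMulChar_iff.mp hχ _ ⟨v, rfl⟩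
  have hmem : Units.mk0 g hg ∈ H := by
    rw [← (MulChar.subgroupOrderIsoSubgroupMulChar F ℂ).symm_apply_apply H]
    exact MulChar.mem_subgroupOrderIsoSubgroupMulChar_symm_iff.mpr fun χ hχ ↦ hall χ (hX χ hχ)
  obtain ⟨v, hv⟩ := hmem
  exact ⟨v, by simpa using congrArg Units.val hv⟩

theorem natCard_ker_powMonoidHom_mulChar {d : ℕ} (hd : d ∣ Fintype.card F - 1) :
    Nat.card (powMonoidHom d : MulChar F ℂ →* MulChar F ℂ).ker = d := by
  rw [IsCyclic.card_powMonoidHom_ker, natCard_mulChar, Nat.gcd_eq_right hd]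

open scoped Classical in
theorem sum_mulChar_pow_eq_one {d : ℕ}
    (hd : d ∣ Fintype.card F - 1) {g : F} (hg : g ≠ 0) :
    ∑ χ : MulChar F ℂ with χ ^ d = 1, χ g = if ∃ h : F, h ^ d = g then (d : ℂ) else 0 := by
  set K := (powMonoidHom d : MulChar F ℂ →* MulChar F ℂ).ker
  let eval : K →* ℂ :=
    { toFun := fun χ ↦ (χ : MulChar F ℂ) g
      map_one' := MulChar.one_apply hg.isUnit
      map_mul' := fun χ ψ ↦ MulChar.mul_apply _ _ g }
  have hsum : ∑ χ : MulChar F ℂ with χ ^ d = 1, χ g = ∑ χ : K, eval χ :=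
    Finset.sum_subtype _ (fun χ ↦ by simp [K]) _
  have heval : eval = 1 ↔ ∃ h : F, h ^ d = g := by
    rw [exists_pow_eq_iff_forall_mulChar hg, DFunLike.ext_iff]
    exact ⟨fun h χ hχ ↦ h ⟨χ, hχ⟩, fun h χ ↦ h χ χ.2⟩
  rw [hsum, sum_hom_units eval, ← Nat.card_eq_fintype_card, natCard_ker_powMonoidHom_mulChar hd]
  rw [Nat.cast_ite, Nat.cast_zero]
  exact if_congr heval rfl rfl

theorem card_orderOf_mulChar_eq_totient {d : ℕ} (hd : d ∣ Fintype.card F - 1) :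
    #{χ : MulChar F ℂ | orderOf χ = d} = d.totient := by
  rw [IsCyclic.card_orderOf_eq_totient]
  rwa [← Nat.card_eq_fintype_card, natCard_mulChar]

theorem norm_mulChar_apply_of_ne_zero (χ : MulChar F ℂ) {x : F} (hx : x ≠ 0) : ‖χ x‖ = 1 := by
  refine Complex.norm_eq_one_of_pow_eq_one ?_ (card_sub_one_ne_zero (F := F))
  rw [← map_pow, FiniteField.pow_card_sub_one_eq_one x hx, map_one]

theorem norm_jacobiSum {χ ψ : MulChar F ℂ} (hχ : χ ≠ 1) (hψ : ψ ≠ 1) (hχψ : χ * ψ ≠ 1) :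
    ‖jacobiSum χ ψ‖ = √(Fintype.card F) := by
  have hconj : star (jacobiSum χ ψ) = jacobiSum χ⁻¹ ψ⁻¹ := by
    simp only [jacobiSum, star_sum, star_mul', MulChar.star_apply']
  have hchar : ringChar ℂ ≠ ringChar F := by
    simpa [ringChar.eq_zero] using (CharP.ringChar_ne_zero_of_finite F).symm
  have h := jacobiSum_mul_jacobiSum_inv hchar hχ hψ hχψ
  rw [← hconj, Complex.star_def, Complex.mul_conj, Complex.normSq_eq_norm_sq] at h
  rw [← Real.sqrt_sq (norm_nonneg _)]
  exact congrArg Real.sqrt (mod_cast h)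

theorem norm_jacobiSum_le {χ ψ : MulChar F ℂ} (h : ¬(χ = 1 ∧ ψ = 1)) :
    ‖jacobiSum χ ψ‖ ≤ √(Fintype.card F) := by
  have hq : (1 : ℝ) ≤ √(Fintype.card F) := Real.one_le_sqrt.mpr (mod_cast Fintype.card_pos)
  by_cases hχ : χ = 1
  · rw [hχ, jacobiSum_one_nontrivial fun hψ ↦ h ⟨hχ, hψ⟩, norm_neg, norm_one]
    exact hq
  by_cases hψ : ψ = 1
  · rw [hψ, jacobiSum_comm, jacobiSum_one_nontrivial hχ, norm_neg, norm_one]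
    exact hq
  by_cases hχψ : χ * ψ = 1
  · rw [← inv_eq_of_mul_eq_one_right hχψ, jacobiSum_nontrivial_inv hχ, norm_neg,
      norm_mulChar_apply_of_ne_zero χ (neg_ne_zero.mpr (one_ne_zero' F))]
    exact hq
  exact (norm_jacobiSum hχ hψ hχψ).le

end FiniteField

section FreeCoeff

open FiniteField
open scoped Classical

variable {F : Type*} [Field F] [Fintype F]

/-- Inclusion–exclusion over the primes of `e`, with `[g is a d-th power] = d⁻¹ ∑_{χ^d = 1} χ g`
(`sum_mulChar_pow_eq_one`), makes this the coefficient of `χ` in the indicator of `e`-free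
elements (`indicator_isEFree_eq_sum`). -/
noncomputable def freeCoeff (e : ℕ) (χ : MulChar F ℂ) : ℝ :=
  ∑ S ∈ e.primeFactors.powerset, if χ ^ (∏ p ∈ S, p) = 1 then ∏ p ∈ S, (-1 / p : ℝ) else 0

theorem prod_neg_indicator_pow_eq_sum {S : Finset ℕ} (hS : ∀ p ∈ S, p.Prime)
    (hdvd : ∏ p ∈ S, p ∣ Fintype.card F - 1) {g : F} (hg : g ≠ 0) :
    ∏ p ∈ S, -(if ∃ h : F, h ^ p = g then 1 else 0 : ℂ) =
      (∏ p ∈ S, (-1 / p : ℂ)) * ∑ χ : MulChar F ℂ with χ ^ (∏ p ∈ S, p) = 1, χ g := by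
  rw [sum_mulChar_pow_eq_one hdvd hg]
  by_cases hpow : ∃ h : F, h ^ (∏ p ∈ S, p) = g
  · have hpows := (exists_pow_prod_primes_iff hS hg).mp hpow
    rw [if_pos hpow, Nat.cast_prod, ← prod_mul_distrib]
    refine prod_congr rfl fun p hp ↦ ?_
    have hp0 : (p : ℂ) ≠ 0 := Nat.cast_ne_zero.mpr (hS p hp).ne_zero
    simp [hpows p hp, hp0]
  · obtain ⟨p, hp, hnpow⟩ := not_forall₂.mp (mt (exists_pow_prod_primes_iff hS hg).mpr hpow)
    rw [if_neg hpow, mul_zero]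
    exact prod_eq_zero hp (by simp [hnpow])

theorem indicator_isEFree_eq_sum {e : ℕ} (he : e ∣ Fintype.card F - 1) (g : F) :
    (if IsEFree e g then (1 : ℂ) else 0) = ∑ χ : MulChar F ℂ, (freeCoeff e χ : ℂ) * χ g := by
  rcases eq_or_ne g 0 with rfl | hg
  · simp [IsEFree, MulChar.map_zero]
  have he0 : e ≠ 0 := ne_zero_of_dvd_ne_zero card_sub_one_ne_zero he
  set A := e.primeFactors
  have hA : ∀ S ∈ A.powerset, ∀ p ∈ S, p.Prime :=
    fun S hS p hp ↦ Nat.prime_of_mem_primeFactors (mem_powerset.mp hS hp)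
  let isPow (d : ℕ) : ℂ := if ∃ h : F, h ^ d = g then 1 else 0
  have hfree : (if IsEFree e g then (1 : ℂ) else 0) = ∏ p ∈ A, (1 + -isPow p) := by
    simp only [isEFree_iff he0, hg, ne_eq, not_false_eq_true, true_and, isPow]
    split_ifs with h
    · exact (prod_eq_one fun p hp ↦ by simp [h p hp]).symm
    · obtain ⟨p, hp, hpow⟩ := not_forall₂.mp h
      exact (prod_eq_zero hp (by simp [not_not.mp hpow])).symm
  have hterm : ∀ S ∈ A.powerset, ∏ p ∈ S, -isPow p =
      (∏ p ∈ S, (-1 / p : ℂ)) * ∑ χ : MulChar F ℂ with χ ^ (∏ p ∈ S, p) = 1, χ g :=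
    fun S hS ↦ prod_neg_indicator_pow_eq_sum (hA S hS) ((prod_dvd_prod_of_subset _ _ _
      (mem_powerset.mp hS)).trans ((Nat.prod_primeFactors_dvd e).trans he)) hg
  rw [hfree, prod_one_add, sum_congr rfl hterm]
  simp only [freeCoeff, Complex.ofReal_sum, sum_mul, mul_sum, sum_filter]
  rw [sum_comm]
  refine sum_congr rfl fun S _ ↦ sum_congr rfl fun χ _ ↦ ?_
  split_ifs <;> simp

theorem freeCoeff_eq (e : ℕ) (χ : MulChar F ℂ) :
    freeCoeff e χ = if orderOf χ ∣ ∏ p ∈ e.primeFactors, p then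
      (∏ p ∈ (orderOf χ).primeFactors, (-1 / p : ℝ)) *
        ∏ p ∈ e.primeFactors \ (orderOf χ).primeFactors, (1 - 1 / p : ℝ) else 0 := by
  set A := e.primeFactors
  set B := (orderOf χ).primeFactors
  have hA : ∀ p ∈ A, p.Prime := fun p hp ↦ Nat.prime_of_mem_primeFactors hp
  have hpow : ∀ S, χ ^ (∏ p ∈ S, p) = 1 ↔ orderOf χ ∣ ∏ p ∈ S, p :=
    fun _ ↦ orderOf_dvd_iff_pow_eq_one.symm
  unfold freeCoeff
  split_ifs with hd
  · obtain ⟨hsq, hBA⟩ := (Nat.dvd_prod_primes_iff hA).mp hd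
    have hterm : ∀ S ∈ A.powerset,
        (if χ ^ (∏ p ∈ S, p) = 1 then ∏ p ∈ S, (-1 / p : ℝ) else 0) =
          (∏ p ∈ S, (-1 / p : ℝ)) * ∏ p ∈ A \ S, (if p ∈ B then 0 else 1 : ℝ) := by
      intro S hS
      have hiff : χ ^ (∏ p ∈ S, p) = 1 ↔ B ⊆ S := by
        rw [hpow, Nat.dvd_prod_primes_iff fun p hp ↦ hA p (mem_powerset.mp hS hp)]
        exact and_iff_right hsq
      by_cases hBS : B ⊆ S
      · rw [if_pos (hiff.mpr hBS), prod_eq_one fun p hp ↦ if_neg fun hpB ↦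
          (mem_sdiff.mp hp).2 (hBS hpB), mul_one]
      · obtain ⟨p, hpB, hpS⟩ := not_subset.mp hBS
        rw [if_neg (mt hiff.mp hBS),
          prod_eq_zero (f := fun q ↦ if q ∈ B then (0 : ℝ) else 1)
          (mem_sdiff.mpr ⟨hBA hpB, hpS⟩) (if_pos hpB), mul_zero]
    rw [sum_congr rfl hterm, ← prod_add, ← prod_sdiff hBA, mul_comm]
    congr 1
    · exact prod_congr rfl fun p hp ↦ by rw [if_pos hp, add_zero]
    · exact prod_congr rfl fun p hp ↦ by rw [if_neg (mem_sdiff.mp hp).2]; ring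
  · exact sum_eq_zero fun S hS ↦ if_neg fun h ↦
      hd (((hpow S).mp h).trans (prod_dvd_prod_of_subset _ _ _ (mem_powerset.mp hS)))

theorem freeCoeff_one (e : ℕ) : freeCoeff e (1 : MulChar F ℂ) = thetaFn e := by
  simp [freeCoeff_eq, thetaFn]

theorem abs_freeCoeff (e : ℕ) (χ : MulChar F ℂ) :
    |freeCoeff e χ| = if orderOf χ ∣ ∏ p ∈ e.primeFactors, p then
      (orderOf χ : ℝ)⁻¹ * ∏ p ∈ e.primeFactors \ (orderOf χ).primeFactors, (1 - 1 / p : ℝ)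
      else 0 := by
  rw [freeCoeff_eq]
  split_ifs with hd
  · have hsq := ((Nat.dvd_prod_primes_iff fun p hp ↦ Nat.prime_of_mem_primeFactors hp).mp hd).1
    have hnonneg : 0 ≤ ∏ p ∈ e.primeFactors \ (orderOf χ).primeFactors, (1 - 1 / p : ℝ) :=
      prod_nonneg fun p hp ↦
        (Nat.prime_of_mem_primeFactors (mem_sdiff.mp hp).1).one_sub_one_div_nonneg
    rw [abs_mul, abs_prod, abs_of_nonneg hnonneg]
    congr 1
    conv_rhs => rw [← Nat.prod_primeFactors_of_squarefree hsq]
    simp [abs_div]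
  · exact abs_zero

theorem card_orderOf_eq_prod_mul_eq_thetaFn {e : ℕ} (he : e ∣ Fintype.card F - 1) {B : Finset ℕ}
    (hB : B ⊆ e.primeFactors) :
    #{χ : MulChar F ℂ | orderOf χ = ∏ p ∈ B, p} *
      (((∏ p ∈ B, p : ℕ) : ℝ)⁻¹ * ∏ p ∈ e.primeFactors \ B, (1 - 1 / p : ℝ)) = thetaFn e := by
  have hBp : ∀ p ∈ B, p.Prime := fun p hp ↦ Nat.prime_of_mem_primeFactors (hB hp)
  have htotient : ((∏ p ∈ B, p).totient : ℝ) = (∏ p ∈ B, p : ℕ) * ∏ p ∈ B, (1 - 1 / p : ℝ) := by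
    have h := congrArg (Rat.cast : ℚ → ℝ) (Nat.totient_eq_mul_prod_factors (∏ p ∈ B, p))
    push_cast at h
    simpa [one_div, Nat.primeFactors_prod hBp] using h
  have hprod0 : ((∏ p ∈ B, p : ℕ) : ℝ) ≠ 0 :=
    Nat.cast_ne_zero.mpr (prod_ne_zero_iff.mpr fun p hp ↦ (hBp p hp).ne_zero)
  rw [card_orderOf_mulChar_eq_totient, htotient, thetaFn, ← prod_sdiff hB]
  · field_simp
  · exact (prod_dvd_prod_of_subset _ _ _ hB).trans ((Nat.prod_primeFactors_dvd e).trans he)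

theorem sum_abs_freeCoeff {e : ℕ} (he : e ∣ Fintype.card F - 1) :
    ∑ χ : MulChar F ℂ, |freeCoeff e χ| = thetaFn e * Wfn e := by
  set A := e.primeFactors
  have hA : ∀ p ∈ A, p.Prime := fun p hp ↦ Nat.prime_of_mem_primeFactors hp
  have hfiber : ∀ B ∈ A.powerset,
      ∑ χ : MulChar F ℂ with orderOf χ ∣ ∏ p ∈ A, p ∧ (orderOf χ).primeFactors = B,
        (orderOf χ : ℝ)⁻¹ * ∏ p ∈ A \ (orderOf χ).primeFactors, (1 - 1 / p : ℝ) = thetaFn e := by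
    intro B hB
    have hBA := mem_powerset.mp hB
    have hBp : ∀ p ∈ B, p.Prime := fun p hp ↦ hA p (hBA hp)
    have hfilter : ({χ : MulChar F ℂ | orderOf χ ∣ ∏ p ∈ A, p ∧ (orderOf χ).primeFactors = B} :
        Finset _) = ({χ | orderOf χ = ∏ p ∈ B, p} : Finset _) := by
      ext χ
      simp only [mem_filter, mem_univ, true_and, Nat.dvd_prod_primes_iff hA]
      refine ⟨fun ⟨⟨hsq, _⟩, hχB⟩ ↦ ?_, fun h ↦ ?_⟩
      · rw [← hχB, Nat.prod_primeFactors_of_squarefree hsq]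
      · rw [h, Nat.primeFactors_prod hBp]
        exact ⟨⟨Nat.squarefree_prod_primes hBp, hBA⟩, rfl⟩
    rw [sum_congr hfilter fun χ hχ ↦ by rw [(mem_filter.mp hχ).2, Nat.primeFactors_prod hBp],
      sum_const, nsmul_eq_mul, card_orderOf_eq_prod_mul_eq_thetaFn he hBA]
  simp only [abs_freeCoeff]
  rw [← sum_filter, ← sum_fiberwise_of_maps_to (t := A.powerset)
    (g := fun χ ↦ (orderOf χ).primeFactors)]
  · simp only [filter_filter]
    rw [sum_congr rfl hfiber, sum_const, card_powerset, nsmul_eq_mul, Wfn, mul_comm, Nat.cast_pow,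
      Nat.cast_two]
  · intro χ hχ
    exact mem_powerset.mpr ((Nat.dvd_prod_primes_iff hA).mp (mem_filter.mp hχ).2).2

section PrimeMul

variable {p e : ℕ}

theorem abs_freeCoeff_prime_mul_sub (hp : p.Prime) (hpe : ¬p ∣ e) (he : e ≠ 0) (χ : MulChar F ℂ) :
    |freeCoeff (p * e) χ - (1 - 1 / p) * freeCoeff e χ| =
      |freeCoeff (p * e) χ| - (1 - 1 / p) * |freeCoeff e χ| := by
  by_cases hd : orderOf χ ∣ ∏ q ∈ e.primeFactors, q
  · have hpA : p ∉ e.primeFactors := fun h ↦ hpe (Nat.dvd_of_mem_primeFactors h)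
    have hpB : p ∉ (orderOf χ).primeFactors := fun h ↦ hpA
      (((Nat.dvd_prod_primes_iff fun q hq ↦ Nat.prime_of_mem_primeFactors hq).mp hd).2 h)
    have hmul : freeCoeff (p * e) χ = (1 - 1 / p) * freeCoeff e χ := by
      rw [freeCoeff_eq, freeCoeff_eq, Nat.primeFactors_prime_mul hp he, prod_insert hpA,
        if_pos (dvd_mul_of_dvd_right hd p), if_pos hd, insert_sdiff_of_notMem _ hpB,
        prod_insert fun h ↦ hpA (mem_sdiff.mp h).1]
      ring
    rw [hmul, sub_self, abs_mul, abs_of_nonneg hp.one_sub_one_div_nonneg, sub_self, abs_zero]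
  · have h0 : freeCoeff e χ = 0 := by rw [freeCoeff_eq, if_neg hd]
    rw [h0, mul_zero, sub_zero, abs_zero, mul_zero, sub_zero]

theorem sum_abs_freeCoeff_prime_mul_sub (hp : p.Prime) (hpe : ¬p ∣ e) (he : e ≠ 0)
    (hpen : p * e ∣ Fintype.card F - 1) :
    ∑ χ : MulChar F ℂ, |freeCoeff (p * e) χ - (1 - 1 / p) * freeCoeff e χ| =
      (1 - 1 / p) * (thetaFn e * Wfn e) := by
  rw [sum_congr rfl fun χ _ ↦ abs_freeCoeff_prime_mul_sub hp hpe he χ, sum_sub_distrib, ← mul_sum,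
    sum_abs_freeCoeff hpen, sum_abs_freeCoeff ((dvd_mul_left e p).trans hpen),
    thetaFn_prime_mul hp hpe he, Wfn_prime_mul hp hpe he]
  push_cast
  ring

end PrimeMul

end FreeCoeff

section CharSum

open FiniteField

variable {F : Type*} [Field F] [Fintype F]

/-- Summing over all of `F` is harmless: every character, the trivial one included, vanishes
at `0`. -/
noncomputable def lineCharSum (a c : F) (χ ψ : MulChar F ℂ) : ℂ :=
  ∑ g : F, χ g * ψ (a - c * g)

theorem lineCharSum_eq {a c : F} (ha : a ≠ 0) (hc : c ≠ 0) (χ ψ : MulChar F ℂ) :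
    lineCharSum a c χ ψ = χ (a / c) * ψ a * jacobiSum χ ψ := by
  rw [lineCharSum, jacobiSum, mul_sum]
  refine (Fintype.sum_bijective _ (mulLeft_bijective₀ _ (div_ne_zero ha hc)) _ _ fun t ↦ ?_).symm
  rw [show a - c * (a / c * t) = a * (1 - t) by field_simp, map_mul, map_mul]
  ring

theorem lineCharSum_one_one {a c : F} (ha : a ≠ 0) (hc : c ≠ 0) :
    lineCharSum a c 1 1 = Fintype.card F - 2 := by
  rw [lineCharSum_eq ha hc, jacobiSum_one_one, MulChar.one_apply (div_ne_zero ha hc).isUnit,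
    MulChar.one_apply ha.isUnit, one_mul, one_mul]

theorem norm_lineCharSum_le {a c : F} (ha : a ≠ 0) (hc : c ≠ 0) {χ ψ : MulChar F ℂ}
    (h : ¬(χ = 1 ∧ ψ = 1)) : ‖lineCharSum a c χ ψ‖ ≤ √(Fintype.card F) := by
  rw [lineCharSum_eq ha hc, norm_mul, norm_mul, norm_mulChar_apply_of_ne_zero χ (div_ne_zero ha hc),
    norm_mulChar_apply_of_ne_zero ψ ha, one_mul, one_mul]
  exact norm_jacobiSum_le h

noncomputable def charPairSum (a c : F) (u v : MulChar F ℂ → ℝ) : ℂ :=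
  ∑ χ, ∑ ψ, (u χ : ℂ) * v ψ * lineCharSum a c χ ψ

theorem Ncnt_eq_charPairSum (a c : F) {e₁ e₂ : ℕ} (h₁ : e₁ ∣ Fintype.card F - 1)
    (h₂ : e₂ ∣ Fintype.card F - 1) :
    (Ncnt a c e₁ e₂ : ℂ) = charPairSum a c (freeCoeff e₁) (freeCoeff e₂) := by
  classical
  have hcount : (Ncnt a c e₁ e₂ : ℂ) = ∑ g : F,
      (if IsEFree e₁ g then (1 : ℂ) else 0) * (if IsEFree e₂ (a - c * g) then (1 : ℂ) else 0) := by
    rw [Ncnt_eq_card, freePairSet, card_filter, Nat.cast_sum]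
    exact sum_congr rfl fun g _ ↦ by split_ifs <;> simp_all
  simp only [hcount, indicator_isEFree_eq_sum h₁, indicator_isEFree_eq_sum h₂, sum_mul_sum]
  simp only [charPairSum, lineCharSum, mul_sum]
  rw [sum_comm]
  refine sum_congr rfl fun χ _ ↦ ?_
  rw [sum_comm]
  exact sum_congr rfl fun ψ _ ↦ sum_congr rfl fun g _ ↦ by ring

theorem charPairSum_sub_mul_left (a c : F) (u u' v : MulChar F ℂ → ℝ) (r : ℝ) :
    charPairSum a c (fun χ ↦ u χ - r * u' χ) v =
      charPairSum a c u v - r * charPairSum a c u' v := by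
  simp only [charPairSum, mul_sum, ← sum_sub_distrib]
  push_cast
  exact sum_congr rfl fun _ _ ↦ sum_congr rfl fun _ _ ↦ by ring

theorem norm_charPairSum_sub_le {a c : F} (ha : a ≠ 0) (hc : c ≠ 0) (u v : MulChar F ℂ → ℝ) :
    ‖charPairSum a c u v - u 1 * v 1 * (Fintype.card F - 2)‖ ≤
      ((∑ χ, |u χ|) * (∑ ψ, |v ψ|) - |u 1| * |v 1|) * √(Fintype.card F) := by
  set G : MulChar F ℂ × MulChar F ℂ → ℂ := fun x ↦ (u x.1 : ℂ) * v x.2 * lineCharSum a c x.1 x.2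
  have hmem : ((1, 1) : MulChar F ℂ × MulChar F ℂ) ∈ univ := mem_univ _
  have hG : charPairSum a c u v = G (1, 1) + ∑ x ∈ univ.erase (1, 1), G x := by
    rw [add_sum_erase _ _ hmem, charPairSum, ← Fintype.sum_prod_type']
  have hbound : ∀ x ∈ univ.erase ((1, 1) : MulChar F ℂ × MulChar F ℂ),
      ‖G x‖ ≤ |u x.1| * |v x.2| * √(Fintype.card F) := by
    intro x hx
    have hx1 : ¬(x.1 = 1 ∧ x.2 = 1) := fun h ↦ (mem_erase.mp hx).1 (Prod.ext h.1 h.2)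
    rw [norm_mul, norm_mul, Complex.norm_real, Complex.norm_real, Real.norm_eq_abs,
      Real.norm_eq_abs]
    exact mul_le_mul_of_nonneg_left (norm_lineCharSum_le ha hc hx1) (by positivity)
  have htotal : ∑ x ∈ univ.erase ((1, 1) : MulChar F ℂ × MulChar F ℂ),
      |u x.1| * |v x.2| * √(Fintype.card F) =
        ((∑ χ, |u χ|) * (∑ ψ, |v ψ|) - |u 1| * |v 1|) * √(Fintype.card F) := by
    rw [eq_sub_of_add_eq' (add_sum_erase univ (fun x ↦ |u x.1| * |v x.2| * √(Fintype.card F)) hmem),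
      Fintype.sum_prod_type, sum_mul_sum, sub_mul, sum_mul]
    simp only [sum_mul]
  have hG11 : G (1, 1) = u 1 * v 1 * (Fintype.card F - 2) := by
    simp only [G, lineCharSum_one_one ha hc]
  rw [hG, hG11, add_sub_cancel_left, ← htotal]
  exact (norm_sum_le _ _).trans (sum_le_sum hbound)

theorem Ncnt_swap {a c : F} (hc : c ≠ 0) (e₁ e₂ : ℕ) : Ncnt a c e₁ e₂ = Ncnt (a / c) c⁻¹ e₂ e₁ := by
  have hleft : ∀ g, a / c - c⁻¹ * (a - c * g) = g := fun g ↦ by field_simp; ring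
  have hright : ∀ h, a - c * (a / c - c⁻¹ * h) = h := fun h ↦ by field_simp; ring
  refine Set.ncard_congr (fun g _ ↦ a - c * g) (fun g hg ↦ ⟨hg.2, (hleft g).symm ▸ hg.1⟩)
    (fun g₁ g₂ _ _ h ↦ mul_left_cancel₀ hc (sub_right_injective h)) fun h hh ↦
    ⟨a / c - c⁻¹ * h, ⟨hh.2, by rw [hright]; exact hh.1⟩, hright h⟩

theorem abs_Ncnt_sub_le {a c : F} (ha : a ≠ 0) (hc : c ≠ 0) {e : ℕ} (he : e ∣ Fintype.card F - 1) :
    |(Ncnt a c e e : ℝ) - thetaFn e ^ 2 * (Fintype.card F - 2)| ≤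
      ((thetaFn e * Wfn e) ^ 2 - thetaFn e ^ 2) * √(Fintype.card F) := by
  have h := norm_charPairSum_sub_le ha hc (freeCoeff e) (freeCoeff e)
  rw [← Ncnt_eq_charPairSum a c he he, freeCoeff_one, sum_abs_freeCoeff he,
    abs_mul_abs_self] at h
  calc _ = ‖(Ncnt a c e e : ℂ) - thetaFn e * thetaFn e * (Fintype.card F - 2)‖ := by
        rw [← Real.norm_eq_abs, ← Complex.norm_real]; push_cast; ring_nf
    _ ≤ _ := h
    _ = _ := by ring

theorem abs_Ncnt_prime_mul_sub_le {a c : F} (ha : a ≠ 0) (hc : c ≠ 0) {p e : ℕ} (hp : p.Prime)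
    (hpe : ¬p ∣ e) (hpen : p * e ∣ Fintype.card F - 1) :
    |(Ncnt a c (p * e) e : ℝ) - (1 - 1 / p) * Ncnt a c e e| ≤
      (1 - 1 / p) * (thetaFn e * Wfn e) ^ 2 * √(Fintype.card F) := by
  have he : e ∣ Fintype.card F - 1 := (dvd_mul_left e p).trans hpen
  have he0 : e ≠ 0 := ne_zero_of_dvd_ne_zero FiniteField.card_sub_one_ne_zero he
  have h := norm_charPairSum_sub_le ha hc
    (fun χ ↦ freeCoeff (p * e) χ - (1 - 1 / p) * freeCoeff e χ) (freeCoeff e)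
  rw [charPairSum_sub_mul_left, ← Ncnt_eq_charPairSum a c hpen he, ← Ncnt_eq_charPairSum a c he he,
    freeCoeff_one, freeCoeff_one, thetaFn_prime_mul hp hpe he0, sub_self, abs_zero, zero_mul,
    sum_abs_freeCoeff_prime_mul_sub hp hpe he0 hpen, sum_abs_freeCoeff he] at h
  calc _ = ‖(Ncnt a c (p * e) e : ℂ) - ((1 - 1 / p : ℝ) : ℂ) * Ncnt a c e e‖ := by
        rw [← Real.norm_eq_abs, ← Complex.norm_real]; push_cast; ring_nf
    _ ≤ _ := by simpa using h
    _ = _ := by ring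

end CharSum

theorem sum_card_sub_le_card_filter_forall {α ι : Type*} [DecidableEq α] (A : Finset α)
    (I : Finset ι) (B : ι → Finset α) (hB : ∀ i ∈ I, B i ⊆ A) :
    ∑ i ∈ I, (#(B i) : ℝ) - (#I - 1) * #A ≤ #{x ∈ A | ∀ i ∈ I, x ∈ B i} := by
  set U := I.biUnion fun i ↦ A \ B i
  have hfilter : ({x ∈ A | ∀ i ∈ I, x ∈ B i} : Finset α) = A \ U := by
    ext x
    simp only [mem_filter, mem_sdiff, mem_biUnion, not_exists, not_and, Decidable.not_not, U]
    tauto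
  have hU : (#U : ℝ) ≤ ∑ i ∈ I, ((#A : ℝ) - #(B i)) := by
    refine (Nat.cast_le.mpr card_biUnion_le).trans ?_
    push_cast
    exact (sum_congr rfl fun i hi ↦ by
      rw [card_sdiff_of_subset (hB i hi), Nat.cast_sub (card_le_card (hB i hi))]).le
  rw [hfilter, card_sdiff_of_subset (biUnion_subset.mpr fun i _ ↦ sdiff_subset),
    Nat.cast_sub (card_le_card (biUnion_subset.mpr fun i _ ↦ sdiff_subset))]
  rw [sum_sub_distrib, sum_const, nsmul_eq_mul] at hU
  linarith

section Sieve

variable {F : Type*} [Field F] [Fintype F]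

theorem sum_Ncnt_prime_mul_sub_le (a c : F) {n e : ℕ} (hn : n ≠ 0) :
    ∑ p ∈ n.primeFactors \ e.primeFactors, ((Ncnt a c (p * e) e : ℝ) + Ncnt a c e (p * e)) -
        (2 * #(n.primeFactors \ e.primeFactors) - 1) * Ncnt a c e e ≤ Ncnt a c n n := by
  classical
  set P := n.primeFactors \ e.primeFactors
  set S := freePairSet a c
  let B : ℕ × Bool → Finset F := fun i ↦ bif i.2 then S (i.1 * e) e else S e (i.1 * e)
  have hB : ∀ i ∈ P ×ˢ univ, B i ⊆ S e e := by
    rintro ⟨p, b⟩ _ g hg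
    cases b <;> simp only [B, S, cond_true, cond_false, mem_freePairSet] at hg ⊢
    · exact ⟨hg.1, hg.2.of_dvd (dvd_mul_left e p)⟩
    · exact ⟨hg.1.of_dvd (dvd_mul_left e p), hg.2⟩
  have hsub : ({g ∈ S e e | ∀ i ∈ P ×ˢ univ, g ∈ B i} : Finset F) ⊆ S n n := by
    intro g hg
    simp only [B, S, mem_filter, mem_freePairSet, mem_product, mem_univ, and_true, Prod.forall,
      Bool.forall_bool, cond_true, cond_false] at hg ⊢
    exact ⟨hg.1.1.of_forall_prime_mul hn fun p hp ↦ ((hg.2 p).2 hp).1,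
      hg.1.2.of_forall_prime_mul hn fun p hp ↦ ((hg.2 p).1 hp).2⟩
  have h1 := sum_card_sub_le_card_filter_forall (S e e) (P ×ˢ univ) B hB
  have h2 : (#({g ∈ S e e | ∀ i ∈ P ×ˢ univ, g ∈ B i} : Finset F) : ℝ) ≤ #(S n n) := by
    exact_mod_cast card_le_card hsub
  rw [sum_product, card_product, card_univ, Fintype.card_bool] at h1
  simp only [Fintype.sum_bool, cond_true, cond_false, B] at h1 h2
  simp only [Ncnt_eq_card]
  push_cast at h1
  linarith

theorem le_sum_Ncnt_prime_mul {a c : F} (ha : a ≠ 0) (hc : c ≠ 0) {e : ℕ}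
    (he : e ∣ Fintype.card F - 1) :
    (2 * ∑ p ∈ (Fintype.card F - 1).primeFactors \ e.primeFactors, (1 - 1 / p : ℝ)) *
        (Ncnt a c e e - (thetaFn e * Wfn e) ^ 2 * √(Fintype.card F)) ≤
      ∑ p ∈ (Fintype.card F - 1).primeFactors \ e.primeFactors,
        ((Ncnt a c (p * e) e : ℝ) + Ncnt a c e (p * e)) := by
  rw [mul_sum, sum_mul]
  refine sum_le_sum fun p hp ↦ ?_
  obtain ⟨hp, hpe, hpen⟩ := prime_mul_dvd_of_mem_primeFactors_sdiff he hp
  have hleft := abs_le.mp (abs_Ncnt_prime_mul_sub_le ha hc hp hpe hpen)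
  have hright := abs_le.mp
    (abs_Ncnt_prime_mul_sub_le (div_ne_zero ha hc) (inv_ne_zero hc) hp hpe hpen)
  rw [← Ncnt_swap hc, ← Ncnt_swap hc] at hright
  linarith [hleft.1, hright.1]

end Sieve

theorem N_final_lower_bound_general (q : ℕ) (hq4 : 4 ≤ q)
    (F : Type*) [Field F] [Fintype F] (hcard : Fintype.card F = q)
    (a c : F) (ha : a ≠ 0) (hc : c ≠ 0)
    (e : ℕ) (he : e ∣ q - 1)
    (P : Finset ℕ) (hP : P = (q - 1).primeFactors \ e.primeFactors)
    (δ : ℝ) (hδ : δ = 1 - 2 * ∑ p ∈ P, (1 / p : ℝ)) (hδpos : 0 < δ) :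
    (Ncnt a c (q - 1) (q - 1) : ℝ) ≥
      δ * thetaFn e ^ 2 * Real.sqrt q *
        (Real.sqrt q - (Wfn e : ℝ) ^ 2 - ((2 * P.card - 1) / δ + 1) * (Wfn e : ℝ) ^ 2) := by
  subst hcard hP
  have hQ2 : 2 ≤ √(Fintype.card F : ℝ) := Real.le_sqrt_of_sq_le (by norm_num; exact_mod_cast hq4)
  have hQQ : √(Fintype.card F : ℝ) ^ 2 = Fintype.card F := Real.sq_sqrt (Nat.cast_nonneg _)
  have hsieve := sum_Ncnt_prime_mul_sub_le a c (e := e) (FiniteField.card_sub_one_ne_zero (F := F))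
  have hpairs := le_sum_Ncnt_prime_mul ha hc he
  have hmain := mul_le_mul_of_nonneg_left (abs_le.mp (abs_Ncnt_sub_le ha hc he)).1 hδpos.le
  have hsum : 2 * ∑ p ∈ (Fintype.card F - 1).primeFactors \ e.primeFactors, (1 - 1 / p : ℝ) =
      2 * #((Fintype.card F - 1).primeFactors \ e.primeFactors) - 1 + δ := by
    rw [hδ, sum_sub_distrib, sum_const, nsmul_eq_mul, mul_one]
    ring
  have hdiv : δ * ((2 * #((Fintype.card F - 1).primeFactors \ e.primeFactors) - 1) / δ + 1) =
      2 * #((Fintype.card F - 1).primeFactors \ e.primeFactors) - 1 + δ := by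
    field_simp
  rw [hsum] at hpairs
  have hslack : 0 ≤ δ * thetaFn e ^ 2 * (√(Fintype.card F : ℝ) - 2) :=
    mul_nonneg (mul_nonneg hδpos.le (sq_nonneg _)) (by linarith)
  linear_combination hsieve + hpairs + hmain + hslack + δ * thetaFn e ^ 2 * hQQ -
    thetaFn e ^ 2 * √(Fintype.card F : ℝ) * (Wfn e : ℝ) ^ 2 * hdiv

/-- The estimate completing the proof of Theorem 2: for `q ≥ 4` a prime power, `e ∣ q - 1`,
`p₁, …, p_s` (`s ≥ 1`) the distinct primes dividing `q - 1` but not `e`, and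
`δ = 1 - 2 ∑ᵢ 1/pᵢ > 0`, one has
`N(q-1, q-1) ≥ δ·θ(e)²·√q·(√q - W(e)² - ((2s-1)/δ + 1)·W(e)²)`. -/
theorem N_final_lower_bound (q : ℕ) (hq : IsPrimePow q) (hq4 : 4 ≤ q)
    (F : Type*) [Field F] [Fintype F] (hcard : Fintype.card F = q)
    (a c : F) (ha : a ≠ 0) (hc : c ≠ 0)
    (e : ℕ) (he : e ∣ q - 1)
    (P : Finset ℕ) (hP : P = (q - 1).primeFactors \ e.primeFactors)
    (hs : P.Nonempty)
    (δ : ℝ) (hδ : δ = 1 - 2 * ∑ p ∈ P, (1 / p : ℝ)) (hδpos : 0 < δ) :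
    (Ncnt a c (q - 1) (q - 1) : ℝ) ≥
      δ * thetaFn e ^ 2 * Real.sqrt q *
        (Real.sqrt q - (Wfn e : ℝ) ^ 2 - ((2 * P.card - 1) / δ + 1) * (Wfn e : ℝ) ^ 2) :=
  N_final_lower_bound_general q hq4 F hcard a c ha hc e he P hP δ hδ hδpos
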